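/- Let A and B be finitely generated abelian groups whose profinite completions Â and B̂ are isomorphic as topological groups. Then A and B are isomorphic. -/

import Mathlib

universe u v

namespace ProfinitePaper

variable (G : Type u) [Group G]

/-- The finite-index normal subgroups of `G`, indexing the finite quotients. -/
abbrev FinNormal : Type u := {N : Subgroup G // N.Normal ∧ N.FiniteIndex}

variable {G} in
instance (N : FinNormal G) : N.1.Normal := N.2.1

variable {G} in
instance (N : FinNormal G) : N.1.FiniteIndex := N.2.2

/-- Each finite quotient carries the discrete topology. -/
instance (N : FinNormal G) : TopologicalSpace (G ⧸ N.1) := ⊥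

instance (N : FinNormal G) : DiscreteTopology (G ⧸ N.1) := ⟨rfl⟩

instance (N : FinNormal G) : IsTopologicalGroup (G ⧸ N.1) where
  continuous_mul := continuous_of_discreteTopology
  continuous_inv := continuous_of_discreteTopology

/-- The profinite completion of `G`, as the inverse limit (compatible families)
inside the product of all finite quotients of `G`. -/
def profiniteCompletionSubgroup : Subgroup (∀ N : FinNormal G, G ⧸ N.1) where
  carrier := {x | ∀ (N M : FinNormal G) (h : N.1 ≤ M.1),
    QuotientGroup.map N.1 M.1 (MonoidHom.id G) (fun _ hx => h hx) (x N) = x M}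
  one_mem' := fun N M h => by simp
  mul_mem' := fun {x y} hx hy N M h => by
    simp only [Pi.mul_apply, map_mul, hx N M h, hy N M h]
  inv_mem' := fun {x} hx N M h => by
    simp only [Pi.inv_apply, map_inv, hx N M h]

/-- The profinite completion `Ĝ` of `G`, regarded as a topological group: it is the
inverse limit of the discrete finite quotients `G/N`, a compact, Hausdorff, totally
disconnected topological group (with the subspace topology from the product of the
discrete finite quotients). -/
abbrev ProfiniteCompletion : Type u := profiniteCompletionSubgroup G

/-- The canonical homomorphism `ι : G → Ĝ`, induced by the quotient maps `G → G/N`. -/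
def iota : G →* ProfiniteCompletion G :=
  MonoidHom.codRestrict (Pi.monoidHom fun N : FinNormal G => QuotientGroup.mk' N.1)
    (profiniteCompletionSubgroup G)
    (fun g N M h => rfl)

section Auxiliary
open Function


noncomputable def addc (G : Type*) [AddCommGroup G] (n : ℕ) : ℕ :=
  Nat.card (G ⧸ (nsmulAddMonoidHom n : G →+ G).range)

theorem addc_congr {G H : Type*} [AddCommGroup G] [AddCommGroup H] (e : G ≃+ H) (n : ℕ) :
    addc G n = addc H n := by
  have hmap : ((nsmulAddMonoidHom n : G →+ G).range).map e.toAddMonoidHom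
      = (nsmulAddMonoidHom n : H →+ H).range := by
    ext y
    simp only [AddSubgroup.mem_map, AddMonoidHom.mem_range, nsmulAddMonoidHom_apply]
    constructor
    · rintro ⟨x, ⟨z, rfl⟩, rfl⟩
      exact ⟨e z, by simp⟩
    · rintro ⟨z, rfl⟩
      exact ⟨n • e.symm z, ⟨e.symm z, rfl⟩, by simp⟩
  exact Nat.card_congr (QuotientAddGroup.congr _ _ e hmap).toEquiv

theorem addc_prod (G H : Type*) [AddCommGroup G] [AddCommGroup H] (n : ℕ) :
    addc (G × H) n = addc G n * addc H n := by
  set S := (nsmulAddMonoidHom n : G →+ G).range with hS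
  set T := (nsmulAddMonoidHom n : H →+ H).range with hT
  let φ : G × H →+ (G ⧸ S) × (H ⧸ T) := (QuotientAddGroup.mk' S).prodMap (QuotientAddGroup.mk' T)
  have hφs : Surjective φ := by
    rintro ⟨a, b⟩
    obtain ⟨x, rfl⟩ := QuotientAddGroup.mk'_surjective S a
    obtain ⟨y, rfl⟩ := QuotientAddGroup.mk'_surjective T b
    exact ⟨(x, y), rfl⟩
  have hrange : (nsmulAddMonoidHom n : G × H →+ G × H).range = φ.ker := by
    ext c
    constructor
    · rintro ⟨⟨x, y⟩, rfl⟩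
      rw [AddMonoidHom.mem_ker, nsmulAddMonoidHom_apply]
      have : φ (n • (x, y)) = (QuotientAddGroup.mk' S (n • x), QuotientAddGroup.mk' T (n • y)) := rfl
      rw [this, Prod.ext_iff]
      constructor
      · exact (QuotientAddGroup.eq_zero_iff _).2 ⟨x, rfl⟩
      · exact (QuotientAddGroup.eq_zero_iff _).2 ⟨y, rfl⟩
    · intro hc
      rw [AddMonoidHom.mem_ker, Prod.ext_iff] at hc
      obtain ⟨x, hx⟩ := (QuotientAddGroup.eq_zero_iff _).1 hc.1
      obtain ⟨y, hy⟩ := (QuotientAddGroup.eq_zero_iff _).1 hc.2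
      rw [nsmulAddMonoidHom_apply] at hx hy
      exact ⟨(x, y), by
        rw [nsmulAddMonoidHom_apply]
        have : n • ((x, y) : G × H) = (n • x, n • y) := rfl
        rw [this, hx, hy]; rfl⟩
      
  unfold addc
  rw [hrange, Nat.card_congr (QuotientAddGroup.quotientKerEquivOfSurjective φ hφs).toEquiv,
    Nat.card_prod]

theorem addc_pi {ι : Type*} [Fintype ι] (G : ι → Type*) [∀ i, AddCommGroup (G i)] (n : ℕ) :
    addc (∀ i, G i) n = ∏ i, addc (G i) n := by
  classical
  set S := fun i => (nsmulAddMonoidHom n : G i →+ G i).range with hSdef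
  let φ : (∀ i, G i) →+ (∀ i, G i ⧸ S i) :=
    { toFun := fun x i => QuotientAddGroup.mk (x i)
      map_zero' := rfl
      map_add' := fun x y => rfl }
  have hφs : Surjective φ := by
    intro y
    choose x hx using fun i => QuotientAddGroup.mk_surjective (y i)
    exact ⟨x, funext hx⟩
  have hrange : (nsmulAddMonoidHom n : (∀ i, G i) →+ ∀ i, G i).range = φ.ker := by
    ext c
    constructor
    · rintro ⟨x, rfl⟩
      have : ∀ i, QuotientAddGroup.mk ((n • x) i) = (0 : G i ⧸ S i) := fun i =>
        (QuotientAddGroup.eq_zero_iff _).2 ⟨x i, rfl⟩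
      exact funext this
    · intro hc
      have : ∀ i, ∃ z, n • z = c i := fun i =>
        (QuotientAddGroup.eq_zero_iff _).1 (congrFun hc i)
      choose z hz using this
      exact ⟨z, funext hz⟩
  unfold addc
  rw [hrange, Nat.card_congr (QuotientAddGroup.quotientKerEquivOfSurjective φ hφs).toEquiv,
    Nat.card_pi]

theorem addc_int (n : ℕ) : addc ℤ n = n := by
  have h : (nsmulAddMonoidHom n : ℤ →+ ℤ).range = AddSubgroup.zmultiples (n : ℤ) := by
    ext x
    simp only [AddMonoidHom.mem_range, nsmulAddMonoidHom_apply, AddSubgroup.mem_zmultiples_iff]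
    constructor
    · rintro ⟨y, rfl⟩; exact ⟨y, by rw [smul_eq_mul, nsmul_eq_mul, mul_comm]⟩
    · rintro ⟨k, rfl⟩; exact ⟨k, by rw [smul_eq_mul, nsmul_eq_mul, mul_comm]⟩
  unfold addc
  rw [h, Nat.card_congr (Int.quotientZMultiplesNatEquivZMod n).toEquiv, Nat.card_zmod]

theorem addc_intquot (q n : ℕ) :
    addc (ℤ ⧸ AddSubgroup.zmultiples (q : ℤ)) n = Nat.gcd q n := by
  set N := AddSubgroup.zmultiples (q : ℤ) with hN
  set R := (nsmulAddMonoidHom n : ℤ →+ ℤ).range with hR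
  set M := N ⊔ R with hM
  have h1 : (nsmulAddMonoidHom n : (ℤ ⧸ N) →+ ℤ ⧸ N).range = M.map (QuotientAddGroup.mk' N) := by
    ext x
    constructor
    · rintro ⟨y, rfl⟩
      obtain ⟨z, rfl⟩ := QuotientAddGroup.mk'_surjective N y
      refine ⟨n • z, AddSubgroup.mem_sup_right ⟨z, rfl⟩, ?_⟩
      rw [map_nsmul, nsmulAddMonoidHom_apply]
    · rintro ⟨m, hm, rfl⟩
      rw [SetLike.mem_coe, hM, AddSubgroup.mem_sup] at hm
      obtain ⟨a, ha, b, ⟨z, rfl⟩, rfl⟩ := hm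
      refine ⟨QuotientAddGroup.mk' N z, ?_⟩
      rw [nsmulAddMonoidHom_apply, ← map_nsmul, nsmulAddMonoidHom_apply]
      have h0 : QuotientAddGroup.mk' N a = 0 := (QuotientAddGroup.eq_zero_iff a).2 ha
      rw [map_add, h0, zero_add]
  have h3 : M = AddSubgroup.zmultiples ((Nat.gcd q n : ℕ) : ℤ) := by
    have hdq : ((Nat.gcd q n : ℕ) : ℤ) ∣ (q : ℤ) := Int.natCast_dvd_natCast.2 (Nat.gcd_dvd_left q n)
    have hdn : ((Nat.gcd q n : ℕ) : ℤ) ∣ (n : ℤ) := Int.natCast_dvd_natCast.2 (Nat.gcd_dvd_right q n)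
    apply le_antisymm
    · rw [hM]
      apply sup_le
      · rintro x ⟨k, rfl⟩
        obtain ⟨t, ht⟩ := hdq
        exact ⟨k * t, by simp only [smul_eq_mul, ht]; ring⟩
      · rintro x ⟨y, rfl⟩
        obtain ⟨t, ht⟩ := hdn
        exact ⟨y * t, by simp only [smul_eq_mul, nsmulAddMonoidHom_apply, nsmul_eq_mul, ht]; ring⟩
    · rintro x ⟨k, rfl⟩
      have hgcd : ((Nat.gcd q n : ℕ) : ℤ) ∈ M := by
        have hb : ((Nat.gcd q n : ℕ) : ℤ) = (q : ℤ) * Int.gcdA q n + (n : ℤ) * Int.gcdB q n := by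
          have := Int.gcd_eq_gcd_ab (q : ℤ) (n : ℤ)
          rwa [Int.gcd_natCast_natCast] at this
        rw [hb]
        refine AddSubgroup.add_mem _ (AddSubgroup.mem_sup_left ⟨Int.gcdA q n, ?_⟩)
          (AddSubgroup.mem_sup_right ⟨Int.gcdB q n, ?_⟩)
        · simp only [smul_eq_mul]; ring
        · simp only [nsmulAddMonoidHom_apply, nsmul_eq_mul]
      exact AddSubgroup.zsmul_mem _ hgcd k
  have h2 := QuotientAddGroup.quotientQuotientEquivQuotient N M le_sup_left
  unfold addc
  rw [h1, Nat.card_congr h2.toEquiv, h3,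
    Nat.card_congr (Int.quotientZMultiplesNatEquivZMod (Nat.gcd q n)).toEquiv, Nat.card_zmod]

theorem addc_zmod (q n : ℕ) : addc (ZMod q) n = Nat.gcd q n := by
  rw [← addc_congr (Int.quotientZMultiplesNatEquivZMod q) n, addc_intquot]

theorem addc_model (r : ℕ) {ι : Type*} [Fintype ι] (q : ι → ℕ) (n : ℕ) :
    addc ((Fin r →₀ ℤ) × ∀ i, ZMod (q i)) n = n ^ r * ∏ i, Nat.gcd (q i) n := by
  rw [addc_prod, addc_congr (Finsupp.addEquivFunOnFinite : (Fin r →₀ ℤ) ≃+ (Fin r → ℤ)) n,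
    addc_pi, addc_pi]
  simp [addc_int, addc_zmod]



theorem gcd_pp {p P : ℕ} (hp : p.Prime) (hP : P.Prime) (e m : ℕ) :
    Nat.gcd (p ^ e) (P ^ m) = P ^ (if p = P then min e m else 0) := by
  split_ifs with h
  · subst h
    refine Nat.dvd_antisymm ?_ (Nat.dvd_gcd (pow_dvd_pow p (min_le_left e m))
      (pow_dvd_pow p (min_le_right e m)))
    obtain ⟨k, hk, hgcd⟩ := (Nat.dvd_prime_pow hp).1 (Nat.gcd_dvd_left (p ^ e) (p ^ m))
    have hk2 : k ≤ m := (Nat.pow_dvd_pow_iff_le_right hp.one_lt).1 (hgcd ▸ Nat.gcd_dvd_right _ _)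
    rw [hgcd]
    exact pow_dvd_pow p (le_min hk hk2)
  · have hc : Nat.Coprime (p ^ e) (P ^ m) :=
      Nat.Coprime.pow _ _ ((Nat.coprime_primes hp hP).2 h)
    rw [pow_zero]
    exact hc

theorem prod_gcd_pp {ι : Type*} [Fintype ι] (p e : ι → ℕ) (hp : ∀ i, (p i).Prime)
    {P : ℕ} (hP : P.Prime) (m : ℕ) :
    ∏ i, Nat.gcd (p i ^ e i) (P ^ m)
      = P ^ (∑ i, if p i = P then min (e i) m else 0) := by
  rw [← Finset.prod_pow_eq_pow_sum]
  exact Finset.prod_congr rfl fun i _ => gcd_pp (hp i) hP (e i) m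

theorem counts_eq {ιA ιB : Type*} [Fintype ιA] [Fintype ιB]
    (rA rB : ℕ) (pA eA : ιA → ℕ) (pB eB : ιB → ℕ)
    (hpA : ∀ i, (pA i).Prime) (hpB : ∀ j, (pB j).Prime)
    (heA : ∀ i, eA i ≠ 0) (heB : ∀ j, eB j ≠ 0)
    (h : ∀ n : ℕ, 0 < n →
      n ^ rA * ∏ i, Nat.gcd (pA i ^ eA i) n = n ^ rB * ∏ j, Nat.gcd (pB j ^ eB j) n) :
    rA = rB ∧ ∀ c : ℕ × ℕ,
      Nat.card {i // (pA i, eA i) = c} = Nat.card {j // (pB j, eB j) = c} := by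
  classical
  have key : ∀ P : ℕ, P.Prime → ∀ m : ℕ,
      m * rA + (∑ i, if pA i = P then min (eA i) m else 0)
        = m * rB + (∑ j, if pB j = P then min (eB j) m else 0) := by
    intro P hP m
    have h1 := h (P ^ m) (pow_pos hP.pos m)
    rw [prod_gcd_pp pA eA hpA hP m, prod_gcd_pp pB eB hpB hP m, ← pow_mul, ← pow_mul,
      ← pow_add, ← pow_add] at h1
    have := Nat.pow_right_injective hP.two_le h1
    omega
  -- rank equality
  have hr : rA = rB := by
    set bound := (Finset.univ.sup pA) ⊔ (Finset.univ.sup pB) with hbound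
    obtain ⟨P, hPb, hP⟩ := Nat.exists_infinite_primes (bound + 1)
    have hA0 : ∀ i, pA i ≠ P := fun i hiP => by
      have : pA i ≤ bound := le_sup_of_le_left (Finset.le_sup (Finset.mem_univ i))
      omega
    have hB0 : ∀ j, pB j ≠ P := fun j hjP => by
      have : pB j ≤ bound := le_sup_of_le_right (Finset.le_sup (Finset.mem_univ j))
      omega
    have := key P hP 1
    rw [Finset.sum_congr rfl (fun i _ => if_neg (hA0 i)),
      Finset.sum_congr rfl (fun j _ => if_neg (hB0 j))] at this
    simpa using this
  subst hr
  refine ⟨rfl, ?_⟩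
  -- per-prime counting functions
  have hS : ∀ P : ℕ, P.Prime → ∀ m : ℕ,
      (∑ i, if pA i = P then min (eA i) m else 0)
        = ∑ j, if pB j = P then min (eB j) m else 0 := by
    intro P hP m
    have := key P hP m
    omega
  have hstepA : ∀ (P m : ℕ),
      (∑ i, if pA i = P then min (eA i) (m + 1) else 0)
        = (∑ i, if pA i = P then min (eA i) m else 0)
          + (Finset.univ.filter (fun i => pA i = P ∧ m + 1 ≤ eA i)).card := by
    intro P m
    rw [Finset.card_filter, ← Finset.sum_add_distrib]
    refine Finset.sum_congr rfl fun i _ => ?_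
    split_ifs <;> omega
  have hstepB : ∀ (P m : ℕ),
      (∑ j, if pB j = P then min (eB j) (m + 1) else 0)
        = (∑ j, if pB j = P then min (eB j) m else 0)
          + (Finset.univ.filter (fun j => pB j = P ∧ m + 1 ≤ eB j)).card := by
    intro P m
    rw [Finset.card_filter, ← Finset.sum_add_distrib]
    refine Finset.sum_congr rfl fun j _ => ?_
    split_ifs <;> omega
  have hN : ∀ P : ℕ, P.Prime → ∀ k : ℕ, 0 < k →
      (Finset.univ.filter (fun i => pA i = P ∧ k ≤ eA i)).card
        = (Finset.univ.filter (fun j => pB j = P ∧ k ≤ eB j)).card := by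
    intro P hP k hk
    obtain ⟨m, rfl⟩ := Nat.exists_eq_add_of_lt hk
    have h1 := hstepA P m
    have h2 := hstepB P m
    have h3 := hS P hP m
    have h4 := hS P hP (m + 1)
    rw [Nat.zero_add] at *
    omega
  -- fiber counts
  intro c
  obtain ⟨P, k⟩ := c
  by_cases hPk : P.Prime ∧ 0 < k
  · obtain ⟨hP, hk⟩ := hPk
    have splitA : ∀ (p e : ιA → ℕ),
        (Finset.univ.filter (fun i => p i = P ∧ k ≤ e i)).card
          = (Finset.univ.filter (fun i => (p i, e i) = (P, k))).card
            + (Finset.univ.filter (fun i => p i = P ∧ k + 1 ≤ e i)).card := by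
      intro p e
      rw [Finset.card_filter, Finset.card_filter, Finset.card_filter, ← Finset.sum_add_distrib]
      refine Finset.sum_congr rfl fun i _ => ?_
      have : ((p i, e i) = (P, k)) ↔ (p i = P ∧ e i = k) := by
        rw [Prod.mk.injEq]
      simp only [this]
      split_ifs <;> omega
    have splitB : ∀ (p e : ιB → ℕ),
        (Finset.univ.filter (fun j => p j = P ∧ k ≤ e j)).card
          = (Finset.univ.filter (fun j => (p j, e j) = (P, k))).card
            + (Finset.univ.filter (fun j => p j = P ∧ k + 1 ≤ e j)).card := by
      intro p e
      rw [Finset.card_filter, Finset.card_filter, Finset.card_filter, ← Finset.sum_add_distrib]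
      refine Finset.sum_congr rfl fun j _ => ?_
      have : ((p j, e j) = (P, k)) ↔ (p j = P ∧ e j = k) := by
        rw [Prod.mk.injEq]
      simp only [this]
      split_ifs <;> omega
    have h1 := splitA pA eA
    have h2 := splitB pB eB
    have h3 := hN P hP k hk
    have h4 := hN P hP (k + 1) (Nat.succ_pos k)
    rw [Nat.card_eq_fintype_card, Nat.card_eq_fintype_card, Fintype.card_subtype,
      Fintype.card_subtype]
    omega
  · have hemptyA : IsEmpty {i // (pA i, eA i) = (P, k)} := by
      refine ⟨fun ⟨i, hi⟩ => ?_⟩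
      rw [Prod.mk.injEq] at hi
      rcases hi with ⟨hi1, hi2⟩
      have hpr := hpA i
      have hez := heA i
      exact hPk ⟨hi1 ▸ hpr, by omega⟩
    have hemptyB : IsEmpty {j // (pB j, eB j) = (P, k)} := by
      refine ⟨fun ⟨j, hj⟩ => ?_⟩
      rw [Prod.mk.injEq] at hj
      rcases hj with ⟨hj1, hj2⟩
      have hpr := hpB j
      have hez := heB j
      exact hPk ⟨hj1 ▸ hpr, by omega⟩
    rw [Nat.card_of_isEmpty, Nat.card_of_isEmpty]



/-- Dropping factors known to be trivial from a product. -/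
def piStripEquiv {ι : Type*} (M : ι → Type*) [∀ i, AddZeroClass (M i)] (P : ι → Prop)
    [DecidablePred P] (h : ∀ i, ¬ P i → Subsingleton (M i)) :
    (∀ i, M i) ≃+ (∀ i : {i // P i}, M i.1) where
  toFun x i := x i.1
  invFun y i := if hi : P i then y ⟨i, hi⟩ else 0
  left_inv x := funext fun i => by
    by_cases hi : P i
    · simp [hi]
    · have := h i hi
      exact Subsingleton.elim _ _
  right_inv y := funext fun i => by simp [i.2]
  map_add' x y := rfl

def addPiCongrLeft' {α β : Type*} (M : α → Type*) [∀ a, AddZeroClass (M a)] (σ : α ≃ β) :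
    (∀ a, M a) ≃+ (∀ b, M (σ.symm b)) :=
  { Equiv.piCongrLeft' M σ with map_add' := fun _ _ => rfl }

def zmodAddEquivOfEq {a b : ℕ} (h : a = b) : ZMod a ≃+ ZMod b := by
  subst h; exact AddEquiv.refl _

theorem model_equiv {ιA ιB : Type*} [Fintype ιA] [Fintype ιB]
    (pA eA : ιA → ℕ) (pB eB : ιB → ℕ)
    (hfib : ∀ c : ℕ × ℕ,
      Nat.card {i // (pA i, eA i) = c} = Nat.card {j // (pB j, eB j) = c}) :
    Nonempty ((∀ i : ιA, ZMod (pA i ^ eA i)) ≃+ (∀ j : ιB, ZMod (pB j ^ eB j))) := by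
  classical
  have hfe : ∀ c : ℕ × ℕ, {i // (fun i => (pA i, eA i)) i = c} ≃ {j // (fun j => (pB j, eB j)) j = c} :=
    fun c => Classical.choice (Finite.card_eq.1 (hfib c))
  let σ : ιA ≃ ιB := Equiv.ofFiberEquiv hfe
  have hσ : ∀ i, (pB (σ i), eB (σ i)) = (pA i, eA i) := fun i => Equiv.ofFiberEquiv_map hfe i
  refine ⟨(addPiCongrLeft' (fun i => ZMod (pA i ^ eA i)) σ).trans
    (AddEquiv.piCongrRight fun j => zmodAddEquivOfEq ?_)⟩
  have := hσ (σ.symm j)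
  rw [Equiv.apply_symm_apply] at this
  rw [Prod.mk.injEq] at this
  rw [this.1, this.2]


/-- Fin. gen. abelian groups with the same quotient-by-`n`-multiples cardinalities
are isomorphic. -/
theorem addEquiv_of_addc_eq {G : Type u} {H : Type u} [AddCommGroup G] [AddCommGroup H]
    [AddGroup.FG G] [AddGroup.FG H] (h : ∀ n : ℕ, 0 < n → addc G n = addc H n) :
    Nonempty (G ≃+ H) := by
  classical
  obtain ⟨rA, ιA, fιA, pA, hpA, eA, ⟨fA⟩⟩ := AddCommGroup.equiv_free_prod_directSum_zmod G
  obtain ⟨rB, ιB, fιB, pB, hpB, eB, ⟨fB⟩⟩ := AddCommGroup.equiv_free_prod_directSum_zmod H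
  have hsubA : ∀ i : ιA, ¬ (eA i ≠ 0) → Subsingleton (ZMod (pA i ^ eA i)) := by
    intro i hi
    rw [not_not] at hi
    rw [hi, pow_zero]
    infer_instance
  have hsubB : ∀ j : ιB, ¬ (eB j ≠ 0) → Subsingleton (ZMod (pB j ^ eB j)) := by
    intro j hj
    rw [not_not] at hj
    rw [hj, pow_zero]
    infer_instance
  let gA : G ≃+ (Fin rA →₀ ℤ) × (∀ i : {i : ιA // eA i ≠ 0}, ZMod (pA i.1 ^ eA i.1)) :=
    fA.trans ((AddEquiv.refl _).prodCongr
      ((DirectSum.addEquivProd _).trans (piStripEquiv _ _ hsubA)))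
  let gB : H ≃+ (Fin rB →₀ ℤ) × (∀ j : {j : ιB // eB j ≠ 0}, ZMod (pB j.1 ^ eB j.1)) :=
    fB.trans ((AddEquiv.refl _).prodCongr
      ((DirectSum.addEquivProd _).trans (piStripEquiv _ _ hsubB)))
  have hGc : ∀ n : ℕ, 0 < n →
      addc G n = n ^ rA * ∏ i : {i : ιA // eA i ≠ 0}, Nat.gcd (pA i.1 ^ eA i.1) n := by
    intro n _
    rw [addc_congr gA n, addc_model]
  have hHc : ∀ n : ℕ, 0 < n →
      addc H n = n ^ rB * ∏ j : {j : ιB // eB j ≠ 0}, Nat.gcd (pB j.1 ^ eB j.1) n := by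
    intro n _
    rw [addc_congr gB n, addc_model]
  obtain ⟨hr, hfib⟩ := counts_eq rA rB
    (fun i : {i : ιA // eA i ≠ 0} => pA i.1) (fun i : {i : ιA // eA i ≠ 0} => eA i.1)
    (fun j : {j : ιB // eB j ≠ 0} => pB j.1) (fun j : {j : ιB // eB j ≠ 0} => eB j.1)
    (fun i => hpA i.1) (fun j => hpB j.1)
    (fun i => i.2) (fun j => j.2)
    (fun n hn => by rw [← hGc n hn, ← hHc n hn]; exact h n hn)
  obtain ⟨eT⟩ := model_equiv
    (fun i : {i : ιA // eA i ≠ 0} => pA i.1) (fun i : {i : ιA // eA i ≠ 0} => eA i.1)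
    (fun j : {j : ιB // eB j ≠ 0} => pB j.1) (fun j : {j : ιB // eB j ≠ 0} => eB j.1) hfib
  subst hr
  exact ⟨gA.trans (((AddEquiv.refl _).prodCongr eT).trans gB.symm)⟩

end Auxiliary
-- ## Step 1
section Step1

variable {A : Type u} [CommGroup A]

/-- The subgroup of `n`-th powers. -/
abbrev pw (A : Type u) [CommGroup A] (n : ℕ) : Subgroup A := (powMonoidHom n : A →* A).range

theorem pw_finiteIndex [Group.FG A] {n : ℕ} (hn : 0 < n) : (pw A n).FiniteIndex := by
  have : Finite (A ⧸ pw A n) := by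
    apply CommGroup.finite_of_fg_torsion
    intro x
    obtain ⟨a, rfl⟩ := QuotientGroup.mk_surjective x
    refine isOfFinOrder_iff_pow_eq_one.2 ⟨n, hn, ?_⟩
    have h2 : (QuotientGroup.mk a : A ⧸ pw A n) ^ n = QuotientGroup.mk (a ^ n) :=
      (map_pow (QuotientGroup.mk' (pw A n)) a n).symm
    rw [h2]
    exact (QuotientGroup.eq_one_iff _).2 ⟨a, rfl⟩
  exact Subgroup.finiteIndex_of_finite_quotient

/-- The subgroup of `n`-th powers as a finite-index normal subgroup. -/
def NPow (A : Type u) [CommGroup A] [Group.FG A] {n : ℕ} (hn : 0 < n) : FinNormal A :=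
  ⟨pw A n, Subgroup.normal_of_comm _, pw_finiteIndex hn⟩

/-- Projection of the profinite completion onto `A ⧸ Aⁿ`. -/
def proj (A : Type u) [CommGroup A] [Group.FG A] {n : ℕ} (hn : 0 < n) :
    ProfiniteCompletion A →* A ⧸ pw A n :=
  (Pi.evalMonoidHom (fun N : FinNormal A => A ⧸ N.1) (NPow A hn)).comp
    (profiniteCompletionSubgroup A).subtype

instance instTopPw (n : ℕ) : TopologicalSpace (A ⧸ pw A n) := ⊥

instance (n : ℕ) : DiscreteTopology (A ⧸ pw A n) := ⟨rfl⟩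

theorem proj_iota [Group.FG A] {n : ℕ} (hn : 0 < n) (a : A) :
    proj A hn (iota A a) = QuotientGroup.mk a := rfl

theorem proj_surjective [Group.FG A] {n : ℕ} (hn : 0 < n) :
    Function.Surjective (proj A hn) := by
  intro q
  obtain ⟨a, rfl⟩ := QuotientGroup.mk_surjective q
  exact ⟨iota A a, rfl⟩

theorem proj_continuous [Group.FG A] {n : ℕ} (hn : 0 < n) : Continuous (proj A hn) :=
  (continuous_apply (NPow A hn)).comp continuous_subtype_val

theorem closure_pow_eq_ker [Group.FG A] {n : ℕ} (hn : 0 < n) :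
    ((powMonoidHom n : ProfiniteCompletion A →* ProfiniteCompletion A).range).topologicalClosure
      = (proj A hn).ker := by
  apply le_antisymm
  · apply Subgroup.topologicalClosure_minimal
    · rintro _ ⟨x, rfl⟩
      rw [MonoidHom.mem_ker, powMonoidHom_apply, map_pow]
      obtain ⟨a, ha⟩ := QuotientGroup.mk_surjective (proj A hn x)
      have h2 : (QuotientGroup.mk a : A ⧸ pw A n) ^ n = QuotientGroup.mk (a ^ n) :=
        (map_pow (QuotientGroup.mk' (pw A n)) a n).symm
      rw [← ha, h2]
      exact (QuotientGroup.eq_one_iff _).2 ⟨a, rfl⟩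
    · have : ((proj A hn).ker : Set (ProfiniteCompletion A)) = (proj A hn) ⁻¹' {1} := rfl
      rw [this]
      exact IsClosed.preimage (proj_continuous hn) isClosed_singleton
  · intro y hy
    rw [MonoidHom.mem_ker] at hy
    have hclosure : (((powMonoidHom n : ProfiniteCompletion A →* ProfiniteCompletion A).range).topologicalClosure : Set (ProfiniteCompletion A)) = closure ((powMonoidHom n : ProfiniteCompletion A →* ProfiniteCompletion A).range : Set (ProfiniteCompletion A)) :=
      Subgroup.topologicalClosure_coe
    rw [← SetLike.mem_coe, hclosure, mem_closure_iff]
    intro o ho hyo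
    -- o is open in the subtype topology
    rw [isOpen_induced_iff] at ho
    obtain ⟨V, hV, rfl⟩ := ho
    obtain ⟨I, u, hu, hpi⟩ := isOpen_pi_iff.1 hV y.1 hyo
    -- the common refinement
    have hfi : (⨅ N ∈ I, (N : FinNormal A).1).FiniteIndex :=
      Subgroup.finiteIndex_iInf' _ (fun N _ => N.2.2)
    have hfi2 : ((NPow A hn).1 ⊓ ⨅ N ∈ I, (N : FinNormal A).1).FiniteIndex := by
      haveI := hfi
      infer_instance
    set MF : FinNormal A := ⟨(NPow A hn).1 ⊓ ⨅ N ∈ I, (N : FinNormal A).1,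
      Subgroup.normal_of_comm _, hfi2⟩ with hMF
    obtain ⟨c, hc⟩ := QuotientGroup.mk_surjective (y.1 MF)
    have hle : MF.1 ≤ (NPow A hn).1 := inf_le_left
    have hcompat := y.2 MF (NPow A hn) hle
    rw [← hc] at hcompat
    have hmapmk : QuotientGroup.map MF.1 (NPow A hn).1 (MonoidHom.id A)
        (fun _ hx => hle hx) (QuotientGroup.mk c) = QuotientGroup.mk c := rfl
    rw [hmapmk] at hcompat
    have hc1 : (QuotientGroup.mk c : A ⧸ (NPow A hn).1) = 1 := by
      have hpr : proj A hn y = y.1 (NPow A hn) := rfl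
      rw [hpr] at hy
      rw [hcompat]
      exact hy
    obtain ⟨b, hb⟩ := (QuotientGroup.eq_one_iff c).1 hc1
    refine ⟨(iota A b) ^ n, ?_, ⟨iota A b, rfl⟩⟩
    -- show membership in o = Subtype.val ⁻¹' V
    show (((iota A b) ^ n : ProfiniteCompletion A) : ∀ N : FinNormal A, A ⧸ N.1) ∈ V
    apply hpi
    intro N hNI
    have hMN : MF.1 ≤ N.1 := le_trans inf_le_right
      (le_trans (iInf_le _ N) (iInf_le _ hNI))
    -- the value of (iota b)^n at MF is mk (b^n) = mk c = y.1 MF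
    have hval : (((iota A b) ^ n : ProfiniteCompletion A) : ∀ N : FinNormal A, A ⧸ N.1) MF
        = y.1 MF := by
      have h1 : (((iota A b) ^ n : ProfiniteCompletion A) : ∀ N : FinNormal A, A ⧸ N.1) MF
          = (QuotientGroup.mk b : A ⧸ MF.1) ^ n := rfl
      have h2 : (QuotientGroup.mk b : A ⧸ MF.1) ^ n = QuotientGroup.mk (b ^ n) :=
        (map_pow (QuotientGroup.mk' MF.1) b n).symm
      rw [powMonoidHom_apply] at hb
      rw [h1, h2, hb, hc]
    have hcompat2 := ((iota A b) ^ n : ProfiniteCompletion A).2 MF N hMN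
    have hcompat3 := y.2 MF N hMN
    rw [hval, hcompat3] at hcompat2
    rw [← hcompat2]
    exact (hu N (Finset.mem_coe.1 hNI)).2

theorem card_pw_eq_card_closure [Group.FG A] {n : ℕ} (hn : 0 < n) :
    Nat.card (A ⧸ pw A n) = Nat.card (ProfiniteCompletion A ⧸
      ((powMonoidHom n : ProfiniteCompletion A →* ProfiniteCompletion A).range).topologicalClosure) := by
  rw [closure_pow_eq_ker hn]
  exact (Nat.card_congr (QuotientGroup.quotientKerEquivOfSurjective (proj A hn)
    (proj_surjective hn)).toEquiv).symm

end Step1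



section Glue

variable {A : Type u} [CommGroup A]

theorem card_pw_eq_addc (A : Type u) [CommGroup A] (n : ℕ) :
    Nat.card (A ⧸ pw A n) = addc (Additive A) n := by
  refine Nat.card_congr (Quotient.congr (Additive.ofMul : A ≃ Additive A) ?_)
  intro a b
  rw [QuotientGroup.leftRel_apply, QuotientAddGroup.leftRel_apply]
  constructor
  · rintro ⟨y, hy⟩
    refine ⟨Additive.ofMul y, ?_⟩
    rw [powMonoidHom_apply] at hy
    show n • Additive.ofMul y = -Additive.ofMul a + Additive.ofMul b
    rw [← ofMul_pow, hy, ofMul_mul, ofMul_inv]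
  · rintro ⟨y, hy⟩
    refine ⟨Additive.toMul y, ?_⟩
    rw [nsmulAddMonoidHom_apply] at hy
    rw [powMonoidHom_apply]
    have : Additive.ofMul ((Additive.toMul y) ^ n) = n • y := by
      rw [ofMul_pow]
      rfl
    have h2 : Additive.ofMul ((Additive.toMul y) ^ n)
        = Additive.ofMul (a⁻¹ * b) := by
      rw [this, hy, ofMul_mul, ofMul_inv]
    exact Additive.ofMul.injective h2

end Glue

section Transfer

variable {X Y : Type u} [CommGroup X] [CommGroup Y]
variable [TopologicalSpace X] [TopologicalSpace Y] [IsTopologicalGroup X] [IsTopologicalGroup Y]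

theorem closure_transfer (e : X ≃* Y) (he : Continuous e) (he' : Continuous e.symm) (n : ℕ) :
    ((powMonoidHom n : X →* X).range.topologicalClosure).map e.toMonoidHom
      = (powMonoidHom n : Y →* Y).range.topologicalClosure := by
  apply le_antisymm
  · rw [Subgroup.map_le_iff_le_comap]
    apply Subgroup.topologicalClosure_minimal
    · rintro _ ⟨x, rfl⟩
      rw [Subgroup.mem_comap]
      apply Subgroup.le_topologicalClosure
      exact ⟨e x, by rw [powMonoidHom_apply, powMonoidHom_apply, map_pow]; rfl⟩
    · have : ((Subgroup.comap e.toMonoidHom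
          ((powMonoidHom n : Y →* Y).range.topologicalClosure)) : Set X)
          = e ⁻¹' ((powMonoidHom n : Y →* Y).range.topologicalClosure : Set Y) := rfl
      rw [this]
      exact IsClosed.preimage he (Subgroup.isClosed_topologicalClosure _)
  · apply Subgroup.topologicalClosure_minimal
    · rintro _ ⟨w, rfl⟩
      rw [powMonoidHom_apply]
      refine ⟨e.symm w ^ n, Subgroup.le_topologicalClosure _ ⟨e.symm w, rfl⟩, ?_⟩
      rw [map_pow, MulEquiv.coe_toMonoidHom, MulEquiv.apply_symm_apply]
    · have : (((powMonoidHom n : X →* X).range.topologicalClosure.map e.toMonoidHom) : Set Y)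
          = e.symm ⁻¹' ((powMonoidHom n : X →* X).range.topologicalClosure : Set X) := by
        ext y
        simp only [Subgroup.coe_map, Set.mem_image, Set.mem_preimage, SetLike.mem_coe]
        constructor
        · rintro ⟨x, hx, rfl⟩
          simpa using hx
        · intro hy
          exact ⟨e.symm y, hy, by simp⟩
      rw [this]
      exact IsClosed.preimage he' (Subgroup.isClosed_topologicalClosure _)

theorem card_closure_transfer (e : X ≃* Y) (he : Continuous e) (he' : Continuous e.symm) (n : ℕ) :
    Nat.card (X ⧸ (powMonoidHom n : X →* X).range.topologicalClosure)
      = Nat.card (Y ⧸ (powMonoidHom n : Y →* Y).range.topologicalClosure) :=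
  Nat.card_congr (QuotientGroup.congr _ _ e (closure_transfer e he he' n)).toEquiv

end Transfer


/-- Finitely generated abelian groups with topologically isomorphic
profinite completions are isomorphic. -/
theorem abelian_profinitely_rigid (A B : Type u) [CommGroup A] [CommGroup B]
    (hfgA : Group.FG A) (hfgB : Group.FG B)
    (e : ProfiniteCompletion A ≃* ProfiniteCompletion B)
    (he : Continuous e) (he' : Continuous e.symm) :
    Nonempty (A ≃* B) := by
  classical
  haveI := hfgA
  haveI := hfgB
  have key : ∀ n : ℕ, 0 < n → Nat.card (A ⧸ pw A n) = Nat.card (B ⧸ pw B n) := by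
    intro n hn
    rw [card_pw_eq_card_closure hn, card_pw_eq_card_closure hn,
      card_closure_transfer e he he' n]
  have key2 : ∀ n : ℕ, 0 < n → addc (Additive A) n = addc (Additive B) n := by
    intro n hn
    rw [← card_pw_eq_addc, ← card_pw_eq_addc]
    exact key n hn
  obtain ⟨f⟩ := addEquiv_of_addc_eq key2
  exact ⟨MulEquiv.toAdditive.symm f⟩

end ProfinitePaper
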